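/- arXiv:2309.08252 — 4 statements merged into one kernel-verified Lean document; each statement's English description precedes it below -/
import Mathlib

section
/- State space truncation error bound: let P solve the CME on the full (finite but larger) state space and P^Ω solve the restricted CME on a subset Ω with the same initial data restricted to Ω. If the mass of the truncated solution satisfies ∑_{x∈Ω} P^Ω(t,x) ≥ 1 - ε, then P(t,x) - ε ≤ P^Ω(t,x) ≤ P(t,x) for all x ∈ Ω. -/
/-!
The generator `A` is Metzler, so `A + c • 1` is entrywise nonnegative for large `c`, and
`exp (t • A) = exp (-t c) • exp (t • (A + c • 1))`. The exponential series of a nonnegative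
matrix has nonnegative terms, and the powers of a principal submatrix are dominated entrywise by
the powers of the full matrix; hence `exp (t • A)` is nonnegative and dominates `exp (t • A^Ω)`
on `Ω × Ω`, which gives `P^Ω ≤ P`. Since the columns of `A` sum to zero, those of `exp (t • A)`
sum to one, so `P(t)` is a probability vector, and for `x ∈ Ω`
`P(x) - P^Ω(x) ≤ ∑_{y ∈ Ω} (P(y) - P^Ω(y)) ≤ 1 - (1 - ε)`.
-/

open Matrix NormedSpace Function

theorem Fintype.sum_comp_le_sum_of_injective {ι κ N : Type*} [Fintype ι] [Fintype κ]
    [AddCommMonoid N] [Preorder N] [AddLeftMono N] {e : ι → κ} (he : Injective e)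
    {f : κ → N} (hf : ∀ k, 0 ≤ f k) : ∑ i, f (e i) ≤ ∑ k, f k :=
  (Finset.sum_map Finset.univ ⟨e, he⟩ f).symm.trans_le (Finset.sum_le_univ_sum_of_nonneg hf)

theorem Fintype.apply_comp_sub_le_sum_sub_sum {ι κ N : Type*} [Fintype ι] [Fintype κ]
    [AddCommGroup N] [PartialOrder N] [IsOrderedAddMonoid N]
    {e : ι → κ} (he : Injective e) {p : κ → N} {q : ι → N} (hp : ∀ k, 0 ≤ p k)
    (hqp : ∀ i, q i ≤ p (e i)) (i : ι) : p (e i) - q i ≤ ∑ k, p k - ∑ j, q j :=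
  calc p (e i) - q i ≤ ∑ j, (p (e j) - q j) :=
        Finset.single_le_sum (f := fun j => p (e j) - q j) (fun j _ => sub_nonneg.2 (hqp j))
          (Finset.mem_univ i)
    _ = ∑ j, p (e j) - ∑ j, q j := Finset.sum_sub_distrib ..
    _ ≤ ∑ k, p k - ∑ j, q j := by gcongr; exact Fintype.sum_comp_le_sum_of_injective he hp

namespace Matrix

variable {ι m : Type*}

def IsMetzler (M : Matrix m m ℝ) : Prop := ∀ i j, i ≠ j → 0 ≤ M i j

theorem IsMetzler.smul {M : Matrix m m ℝ} (hM : M.IsMetzler) {t : ℝ} (ht : 0 ≤ t) :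
    (t • M).IsMetzler :=
  fun i j hij => mul_nonneg ht (hM i j hij)

variable [Fintype ι] [Fintype m]

theorem mulVec_comp_apply_le {F : Matrix ι ι ℝ} {E : Matrix m m ℝ} {e : ι → m}
    (he : Injective e) (hE : ∀ i j, 0 ≤ E i j) (hFE : ∀ a b, F a b ≤ E (e a) (e b))
    {v : m → ℝ} (hv : ∀ i, 0 ≤ v i) (a : ι) : (F *ᵥ (v ∘ e)) a ≤ (E *ᵥ v) (e a) :=
  calc ∑ b, F a b * v (e b) ≤ ∑ b, E (e a) (e b) * v (e b) := by
        gcongr with b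
        · exact hv _
        · exact hFE a b
    _ ≤ ∑ k, E (e a) k * v k :=
        Fintype.sum_comp_le_sum_of_injective he (f := fun k => E (e a) k * v k) fun k =>
          mul_nonneg (hE _ _) (hv k)

variable [DecidableEq ι] [DecidableEq m]

theorem exp_add_algebraMap (M : Matrix m m ℝ) (c : ℝ) :
    exp (M + algebraMap ℝ (Matrix m m ℝ) c) = Real.exp c • exp M := by
  rw [Matrix.exp_add_of_commute _ _ (Algebra.commutes c M).symm, algebraMap_eq_diagonal,
    exp_diagonal, Pi.exp_def]
  ext i j
  simp [← Real.exp_eq_exp_ℝ, mul_comm]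

section SeriesExpansion

attribute [local instance] Matrix.linftyOpNormedRing Matrix.linftyOpNormedAlgebra

theorem hasSum_exp_apply (M : Matrix m m ℝ) (i j : m) :
    HasSum (fun n => (n.factorial⁻¹ : ℝ) * (M ^ n) i j) (exp M i j) :=
  Pi.hasSum.1 (Pi.hasSum.1 (exp_series_hasSum_exp' (𝕂 := ℝ) M) i) j

theorem vecMul_exp_of_vecMul_eq_zero {v : m → ℝ} {M : Matrix m m ℝ} (h : v ᵥ* M = 0) :
    v ᵥ* exp M = v := by
  have hseries := (exp_series_hasSum_exp' (𝕂 := ℝ) M).map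
    (AddMonoidHom.mk' (fun X : Matrix m m ℝ => v ᵥ* X) fun A B => vecMul_add A B v)
    (continuous_const.matrix_vecMul continuous_id)
  refine hseries.unique ((hasSum_ite_eq 0 v).congr_fun fun n => ?_)
  rcases n with _ | n
  · simp
  · simp [vecMul_smul, pow_succ', ← vecMul_vecMul, h]

end SeriesExpansion

theorem exp_apply_nonneg_of_nonneg {M : Matrix m m ℝ} (hM : ∀ i j, 0 ≤ M i j) (i j : m) :
    0 ≤ exp M i j :=
  hasSum_le (fun n => mul_nonneg (by positivity) (pow_apply_nonneg hM n i j))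
    hasSum_zero (hasSum_exp_apply M i j)

theorem submatrix_pow_apply_le {M : Matrix m m ℝ} (hM : ∀ i j, 0 ≤ M i j) {e : ι → m}
    (he : Injective e) (n : ℕ) (a b : ι) : (M.submatrix e e ^ n) a b ≤ (M ^ n) (e a) (e b) := by
  induction n generalizing b with
  | zero => by_cases hab : a = b <;> simp [hab, he.ne]
  | succ n ih =>
    rw [pow_succ, pow_succ, mul_apply, mul_apply]
    calc ∑ c, (M.submatrix e e ^ n) a c * M (e c) (e b)
        ≤ ∑ c, (M ^ n) (e a) (e c) * M (e c) (e b) := by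
          gcongr with c
          · exact hM _ _
          · exact ih c
      _ ≤ ∑ k, (M ^ n) (e a) k * M k (e b) :=
          Fintype.sum_comp_le_sum_of_injective he (f := fun k => (M ^ n) (e a) k * M k (e b))
            fun k => mul_nonneg (pow_apply_nonneg hM n _ _) (hM _ _)

theorem exp_submatrix_apply_le_of_nonneg {M : Matrix m m ℝ} (hM : ∀ i j, 0 ≤ M i j)
    {e : ι → m} (he : Injective e) (a b : ι) : exp (M.submatrix e e) a b ≤ exp M (e a) (e b) :=
  hasSum_le (fun n => mul_le_mul_of_nonneg_left (submatrix_pow_apply_le hM he n a b)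
    (by positivity)) (hasSum_exp_apply _ a b) (hasSum_exp_apply M _ _)

namespace IsMetzler

variable {M : Matrix m m ℝ}

theorem exists_nonneg_add_algebraMap (hM : M.IsMetzler) :
    ∃ c : ℝ, ∀ i j, 0 ≤ (M + algebraMap ℝ (Matrix m m ℝ) c) i j := by
  refine ⟨∑ k, |M k k|, fun i j => ?_⟩
  rw [add_apply, algebraMap_matrix_apply, Algebra.algebraMap_self, RingHom.id_apply]
  by_cases hij : i = j
  · subst hij
    have hdiag : |M i i| ≤ ∑ k, |M k k| :=
      Finset.single_le_sum (f := fun k => |M k k|) (fun k _ => abs_nonneg _) (Finset.mem_univ i)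
    rw [if_pos rfl]
    linarith [neg_abs_le (M i i)]
  · simpa [hij] using hM i j hij

theorem exp_apply_nonneg (hM : M.IsMetzler) (i j : m) : 0 ≤ exp M i j := by
  obtain ⟨c, hc⟩ := hM.exists_nonneg_add_algebraMap
  have hshift := exp_apply_nonneg_of_nonneg hc i j
  rw [exp_add_algebraMap, smul_apply, smul_eq_mul] at hshift
  exact nonneg_of_mul_nonneg_right hshift (Real.exp_pos c)

theorem exp_submatrix_apply_le (hM : M.IsMetzler) {e : ι → m} (he : Injective e) (a b : ι) :
    exp (M.submatrix e e) a b ≤ exp M (e a) (e b) := by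
  obtain ⟨c, hc⟩ := hM.exists_nonneg_add_algebraMap
  have hsub : (M + algebraMap ℝ (Matrix m m ℝ) c).submatrix e e =
      M.submatrix e e + algebraMap ℝ (Matrix ι ι ℝ) c := by
    ext x y
    simp [algebraMap_matrix_apply, he.eq_iff]
  have hshift := exp_submatrix_apply_le_of_nonneg hc he a b
  rw [hsub, exp_add_algebraMap, exp_add_algebraMap, smul_apply, smul_apply, smul_eq_mul,
    smul_eq_mul] at hshift
  exact le_of_mul_le_mul_left hshift (Real.exp_pos c)

end IsMetzler

end Matrix

theorem fsp_truncation_error_bound_general (S : Type*) [Fintype S] [DecidableEq S]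
    (Ω : Set S) [DecidablePred (· ∈ Ω)]
    (A : Matrix S S ℝ)
    (hMetzler : ∀ i j, i ≠ j → 0 ≤ A i j)
    (hcols : ∀ j, ∑ i, A i j = 0)
    (P0 : S → ℝ) (hP0 : ∀ i, 0 ≤ P0 i) (hP0sum : ∑ i, P0 i = 1)
    (t : ℝ) (ht : 0 ≤ t) (ε : ℝ)
    (hmass : 1 - ε ≤ ∑ x : Ω,
      (NormedSpace.exp (t • A.submatrix (Subtype.val : Ω → S) Subtype.val)).mulVec
        (fun y : Ω => P0 y) x) :
    ∀ x : Ω,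
      (NormedSpace.exp (t • A)).mulVec P0 x - ε ≤
        (NormedSpace.exp (t • A.submatrix (Subtype.val : Ω → S) Subtype.val)).mulVec
          (fun y : Ω => P0 y) x ∧
      (NormedSpace.exp (t • A.submatrix (Subtype.val : Ω → S) Subtype.val)).mulVec
          (fun y : Ω => P0 y) x ≤
        (NormedSpace.exp (t • A)).mulVec P0 x := by
  intro x
  set E := exp (t • A)
  set F := exp (t • A.submatrix (Subtype.val : Ω → S) (Subtype.val : Ω → S))
  have htA : (t • A).IsMetzler := IsMetzler.smul hMetzler ht
  have hE : ∀ i j, 0 ≤ E i j := htA.exp_apply_nonneg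
  have hFE : ∀ a b : Ω, F a b ≤ E a b := htA.exp_submatrix_apply_le Subtype.val_injective
  have hP : ∀ i, 0 ≤ (E *ᵥ P0) i := fun i =>
    Finset.sum_nonneg fun j _ => mul_nonneg (hE i j) (hP0 j)
  have hQP : ∀ a : Ω, (F *ᵥ fun y : Ω => P0 y) a ≤ (E *ᵥ P0) a :=
    mulVec_comp_apply_le Subtype.val_injective hE hFE hP0
  have hcolsum : 1 ᵥ* E = 1 := vecMul_exp_of_vecMul_eq_zero <| by
    ext j
    simp [vecMul, dotProduct, ← Finset.mul_sum, hcols]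
  have hPsum : ∑ i, (E *ᵥ P0) i = 1 := by
    rw [← one_dotProduct, dotProduct_mulVec, hcolsum, one_dotProduct, hP0sum]
  refine ⟨?_, hQP x⟩
  linarith [Fintype.apply_comp_sub_le_sum_sub_sum Subtype.val_injective hP hQP x]

/-- Munsky–Khammash finite state projection bound.  If the mass of
the truncated solution is at least `1 - ε`, then on the truncated state space
the truncated solution is squeezed between `P(t) - ε` and `P(t)`. -/
theorem fsp_truncation_error_bound (S : Type*) [Fintype S] [DecidableEq S]
    (Ω : Set S) [DecidablePred (· ∈ Ω)]
    (A : Matrix S S ℝ)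
    (hMetzler : ∀ i j, i ≠ j → 0 ≤ A i j)
    (hcols : ∀ j, ∑ i, A i j = 0)
    (P0 : S → ℝ) (hP0 : ∀ i, 0 ≤ P0 i) (hP0sum : ∑ i, P0 i = 1)
    (t : ℝ) (ht : 0 ≤ t) (ε : ℝ) (hε : 0 ≤ ε)
    (hmass : 1 - ε ≤ ∑ x : Ω,
      (NormedSpace.exp (t • A.submatrix (Subtype.val : Ω → S) Subtype.val)).mulVec
        (fun y : Ω => P0 y) x) :
    ∀ x : Ω,
      (NormedSpace.exp (t • A)).mulVec P0 x - ε ≤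
        (NormedSpace.exp (t • A.submatrix (Subtype.val : Ω → S) Subtype.val)).mulVec
          (fun y : Ω => P0 y) x ∧
      (NormedSpace.exp (t • A.submatrix (Subtype.val : Ω → S) Subtype.val)).mulVec
          (fun y : Ω => P0 y) x ≤
        (NormedSpace.exp (t • A)).mulVec P0 x :=
  fsp_truncation_error_bound_general S Ω A hMetzler hcols P0 hP0 hP0sum t ht ε hmass
end

section
/- The mass of the finite state projection solution is non-increasing in time: if A^Ω is a Metzler matrix whose column sums are all ≤ 0 and P₀ ≥ 0, then t ↦ ∑_{x∈Ω} (exp(tA^Ω)P₀)(x) is non-increasing; in particular ∑_x P^Ω(t,x) ≤ ∑_x P₀(x). -/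
/-!
The mass `m(t) = ∑ₓ (exp(tA) P₀)(x)` has derivative `m'(t) = ∑ⱼ (∑ᵢ A i j) (exp(tA) P₀)(j)`,
which is `≤ 0` as soon as `exp(tA) P₀ ≥ 0`. That nonnegativity holds because `tA + c` is
entrywise nonnegative for a large scalar `c` (`A` is Metzler), so
`exp(tA) = e^{-c} exp(tA + c)` is a positively rescaled series of nonnegative matrices.
-/

open Matrix

attribute [local instance] Matrix.linftyOpNormedRing Matrix.linftyOpNormedAlgebra

namespace Matrix

variable {n : Type*} [Fintype n]

section OrderedRing

variable {R : Type*} [Ring R] [PartialOrder R] [IsOrderedRing R]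

theorem mulVec_nonneg {M : Matrix n n R} (hM : ∀ i j, 0 ≤ M i j) {v : n → R}
    (hv : ∀ j, 0 ≤ v j) (i : n) : 0 ≤ (M *ᵥ v) i :=
  Finset.sum_nonneg fun j _ => mul_nonneg (hM i j) (hv j)

theorem sum_mulVec_nonpos {M : Matrix n n R} (hM : ∀ j, ∑ i, M i j ≤ 0) {v : n → R}
    (hv : ∀ j, 0 ≤ v j) : ∑ i, (M *ᵥ v) i ≤ 0 := by
  simp only [mulVec, dotProduct]
  rw [Finset.sum_comm]
  simp only [← Finset.sum_mul]
  exact Finset.sum_nonpos fun j _ => mul_nonpos_of_nonpos_of_nonneg (hM j) (hv j)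

end OrderedRing

variable [DecidableEq n]

theorem exp_apply_nonneg {M : Matrix n n ℝ} (hM : ∀ i j, 0 ≤ M i j) (i j : n) :
    0 ≤ NormedSpace.exp M i j := by
  have hs := (NormedSpace.expSeries_summable' (𝕂 := ℝ) M).hasSum
  rw [congrFun (NormedSpace.exp_eq_tsum ℝ) M]
  exact (Pi.hasSum.1 (Pi.hasSum.1 hs i) j).nonneg fun k =>
    mul_nonneg (by positivity) (pow_apply_nonneg hM k i j)

theorem exp_apply_nonneg_of_offDiag_nonneg {M : Matrix n n ℝ} (hM : ∀ i j, i ≠ j → 0 ≤ M i j)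
    (i j : n) : 0 ≤ NormedSpace.exp M i j := by
  set c : ℝ := ∑ k, |M k k|
  have hshift : ∀ i j, 0 ≤ (M + algebraMap ℝ _ c) i j := by
    intro i j
    rcases eq_or_ne i j with rfl | hij
    · have : |M i i| ≤ c :=
        Finset.single_le_sum (fun k _ => abs_nonneg (M k k)) (Finset.mem_univ i)
      simp only [add_apply, algebraMap_matrix_apply, if_true, Algebra.algebraMap_self,
        RingHom.id_apply]
      linarith [neg_abs_le (M i i)]
    · simpa [algebraMap_matrix_apply, hij] using hM i j hij
  have hscalar : NormedSpace.exp (algebraMap ℝ (Matrix n n ℝ) c) = algebraMap ℝ _ (Real.exp c) := by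
    rw [Real.exp_eq_exp_ℝ]
    exact (NormedSpace.algebraMap_exp_comm c).symm
  have hexp : NormedSpace.exp (M + algebraMap ℝ _ c) = Real.exp c • NormedSpace.exp M := by
    rw [Matrix.exp_add_of_commute _ _ (Algebra.commutes c M).symm, hscalar, ← Algebra.commutes,
      Algebra.smul_def]
  have := exp_apply_nonneg hshift i j
  rw [hexp, smul_apply, smul_eq_mul] at this
  exact nonneg_of_mul_nonneg_right this (Real.exp_pos c)

theorem _root_.HasDerivAt.sum_mulVec {M : ℝ → Matrix n n ℝ} {M' : Matrix n n ℝ} {t : ℝ}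
    (hM : HasDerivAt M M' t) (v : n → ℝ) :
    HasDerivAt (fun s => ∑ i, (M s *ᵥ v) i) (∑ i, (M' *ᵥ v) i) t := by
  have hentry : ∀ i j, HasDerivAt (fun s => M s i j) (M' i j) t := fun i j =>
    (LinearMap.toContinuousLinearMap (entryLinearMap ℝ ℝ i j)).hasFDerivAt.comp_hasDerivAt t hM
  simp only [mulVec, dotProduct]
  exact HasDerivAt.fun_sum fun i _ => HasDerivAt.fun_sum fun j _ => (hentry i j).mul_const (v j)

end Matrix

/-- for a Metzler sub-generator (non-positive column sums) and
non-negative initial data, the total mass of `exp(tA^Ω)P₀` is non-increasing in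
time; in particular it never exceeds the initial mass. -/
theorem fsp_mass_nonincreasing (Ω : Type*) [Fintype Ω] [DecidableEq Ω]
    (AΩ : Matrix Ω Ω ℝ)
    (hMetzler : ∀ i j, i ≠ j → 0 ≤ AΩ i j)
    (hcols : ∀ j, ∑ i, AΩ i j ≤ 0)
    (P0 : Ω → ℝ) (hP0 : ∀ i, 0 ≤ P0 i) :
    AntitoneOn (fun t : ℝ => ∑ x, (NormedSpace.exp (t • AΩ)).mulVec P0 x)
        (Set.Ici (0 : ℝ)) ∧
      ∀ t : ℝ, 0 ≤ t →
        ∑ x, (NormedSpace.exp (t • AΩ)).mulVec P0 x ≤ ∑ x, P0 x := by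
  have hderiv (t : ℝ) : HasDerivAt (fun t : ℝ => ∑ x, (NormedSpace.exp (t • AΩ)).mulVec P0 x)
      (∑ x, ((AΩ * NormedSpace.exp (t • AΩ)) *ᵥ P0) x) t :=
    (hasDerivAt_exp_smul_const' AΩ t).sum_mulVec P0
  have hexp_nonneg {t : ℝ} (ht : 0 ≤ t) (i j : Ω) : 0 ≤ NormedSpace.exp (t • AΩ) i j :=
    exp_apply_nonneg_of_offDiag_nonneg (fun i j hij => mul_nonneg ht (hMetzler i j hij)) i j
  have hanti := antitoneOn_of_hasDerivWithinAt_nonpos (convex_Ici 0)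
    (continuousOn_of_forall_continuousAt fun t _ => (hderiv t).continuousAt)
    (fun t _ => (hderiv t).hasDerivWithinAt) fun t ht => by
      rw [← mulVec_mulVec]
      exact sum_mulVec_nonpos hcols (mulVec_nonneg (hexp_nonneg (interior_subset ht)) hP0)
  refine ⟨hanti, fun t ht => ?_⟩
  simpa using hanti Set.self_mem_Ici ht ht
end

section
/- Uniqueness of the low-rank representation up to orthogonal transformations: if ∑_{i,j=1}^r X_i¹ S_{ij} X_j² = ∑_{i,j=1}^r Y_i¹ T_{ij} Y_j² where {X_i¹}, {Y_i¹} are orthonormal families in ℓ²(Ω₁), {X_j²}, {Y_j²} are orthonormal families in ℓ²(Ω₂), and S, T ∈ ℝ^{r×r} are invertible, then there exist orthogonal matrices U, V ∈ O(r) with Y¹ = X¹U, Y² = X²V and T = Uᵀ S V. -/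
open Matrix

/-- uniqueness of the low-rank representation up to orthogonal
transformations of the factors. -/
theorem dlr_representation_unique_up_to_orthogonal (n1 n2 r : ℕ)
    (X1 Y1 : Matrix (Fin n1) (Fin r) ℝ) (X2 Y2 : Matrix (Fin n2) (Fin r) ℝ)
    (S T : Matrix (Fin r) (Fin r) ℝ)
    (hX1 : X1ᵀ * X1 = 1) (hY1 : Y1ᵀ * Y1 = 1)
    (hX2 : X2ᵀ * X2 = 1) (hY2 : Y2ᵀ * Y2 = 1)
    (hS : IsUnit S.det) (hT : IsUnit T.det)
    (heq : X1 * S * X2ᵀ = Y1 * T * Y2ᵀ) :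
    ∃ U V : Matrix (Fin r) (Fin r) ℝ,
      Uᵀ * U = 1 ∧ Vᵀ * V = 1 ∧
      Y1 = X1 * U ∧ Y2 = X2 * V ∧ T = Uᵀ * S * V := by
  have hTinv : T * T⁻¹ = 1 := Matrix.mul_nonsing_inv T hT
  have hTt : IsUnit Tᵀ.det := by rwa [Matrix.det_transpose]
  have hTtinv : Tᵀ * Tᵀ⁻¹ = 1 := Matrix.mul_nonsing_inv Tᵀ hTt
  refine ⟨S * (X2ᵀ * Y2) * T⁻¹, Sᵀ * (X1ᵀ * Y1) * Tᵀ⁻¹, ?_⟩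
  set U : Matrix (Fin r) (Fin r) ℝ := S * (X2ᵀ * Y2) * T⁻¹ with hU
  set V : Matrix (Fin r) (Fin r) ℝ := Sᵀ * (X1ᵀ * Y1) * Tᵀ⁻¹ with hV
  -- Y1 = X1 * U
  have hY1eq : Y1 = X1 * U := by
    calc Y1 = Y1 * T * Y2ᵀ * Y2 * T⁻¹ := by
          rw [Matrix.mul_assoc (Y1 * T), hY2, Matrix.mul_one, Matrix.mul_assoc, hTinv,
            Matrix.mul_one]
      _ = X1 * S * X2ᵀ * Y2 * T⁻¹ := by rw [heq]
      _ = X1 * U := by rw [hU]; simp only [Matrix.mul_assoc]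
  -- transposed equation
  have heqT : X2 * Sᵀ * X1ᵀ = Y2 * Tᵀ * Y1ᵀ := by
    have := congrArg Matrix.transpose heq
    simpa [Matrix.transpose_mul, Matrix.mul_assoc] using this
  have hY2eq : Y2 = X2 * V := by
    calc Y2 = Y2 * Tᵀ * Y1ᵀ * Y1 * Tᵀ⁻¹ := by
          rw [Matrix.mul_assoc (Y2 * Tᵀ), hY1, Matrix.mul_one, Matrix.mul_assoc, hTtinv,
            Matrix.mul_one]
      _ = X2 * Sᵀ * X1ᵀ * Y1 * Tᵀ⁻¹ := by rw [heqT]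
      _ = X2 * V := by rw [hV]; simp only [Matrix.mul_assoc]
  have hUU : Uᵀ * U = 1 := by
    have : (X1 * U)ᵀ * (X1 * U) = 1 := by rw [← hY1eq]; exact hY1
    rwa [Matrix.transpose_mul, Matrix.mul_assoc, ← Matrix.mul_assoc X1ᵀ, hX1,
      Matrix.one_mul] at this
  have hVV : Vᵀ * V = 1 := by
    have : (X2 * V)ᵀ * (X2 * V) = 1 := by rw [← hY2eq]; exact hY2
    rwa [Matrix.transpose_mul, Matrix.mul_assoc, ← Matrix.mul_assoc X2ᵀ, hX2,
      Matrix.one_mul] at this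
  refine ⟨hUU, hVV, hY1eq, hY2eq, ?_⟩
  -- S = U * T * Vᵀ
  have hS' : S = U * T * Vᵀ := by
    have h : X1 * S * X2ᵀ = X1 * (U * T * Vᵀ) * X2ᵀ := by
      rw [heq, hY1eq, hY2eq, Matrix.transpose_mul]
      simp only [Matrix.mul_assoc]
    have h2 := congrArg (fun M => X1ᵀ * M * X2) h
    simpa only [Matrix.mul_assoc, ← Matrix.mul_assoc X1ᵀ X1, hX1, Matrix.one_mul,
      ← Matrix.mul_assoc _ X2ᵀ X2, hX2, Matrix.mul_one,
      show ∀ A : Matrix (Fin r) (Fin r) ℝ, A * (X2ᵀ * X2) = A by intro A; rw [hX2, Matrix.mul_one]] using h2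
  rw [hS']
  simp only [Matrix.mul_assoc]
  rw [hVV, Matrix.mul_one,
    show Uᵀ * (U * T) = Uᵀ * U * T from (Matrix.mul_assoc Uᵀ U T).symm, hUU, Matrix.one_mul]
end

section
/- The range of the tangent projector equals the tangent space: 𝒫(g) ∈ { Ẋ¹ S (X²)ᵀ + X¹ Ṡ (X²)ᵀ + X¹ S (Ẋ²)ᵀ : Ṡ ∈ ℝ^{r×r}, (X¹)ᵀ Ẋ¹ = 0, (X²)ᵀ Ẋ² = 0 } for every g ∈ ℝ^{n₁×n₂}, where S is any invertible r×r matrix; conversely every element of this set is fixed by 𝒫. -/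
open Matrix

/-- The tangent-space projector of the fixed-rank manifold at `P = X¹ S (X²)ᵀ`. -/
noncomputable def tangentProjector {n1 n2 r : ℕ}
    (X1 : Matrix (Fin n1) (Fin r) ℝ) (X2 : Matrix (Fin n2) (Fin r) ℝ)
    (g : Matrix (Fin n1) (Fin n2) ℝ) : Matrix (Fin n1) (Fin n2) ℝ :=
  X1 * X1ᵀ * g + g * (X2 * X2ᵀ) - X1 * X1ᵀ * g * (X2 * X2ᵀ)

/-- the range of the tangent projector equals the tangent space of
the rank-`r` manifold at `P = X¹ S (X²)ᵀ`, and every tangent vector is fixed by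
the projector. -/
theorem tangentProjector_range_eq_tangent_space (n1 n2 r : ℕ)
    (X1 : Matrix (Fin n1) (Fin r) ℝ) (X2 : Matrix (Fin n2) (Fin r) ℝ)
    (S : Matrix (Fin r) (Fin r) ℝ)
    (hX1 : X1ᵀ * X1 = 1) (hX2 : X2ᵀ * X2 = 1) (hS : IsUnit S.det) :
    (∀ g : Matrix (Fin n1) (Fin n2) ℝ,
      ∃ (dX1 : Matrix (Fin n1) (Fin r) ℝ) (dS : Matrix (Fin r) (Fin r) ℝ)
        (dX2 : Matrix (Fin n2) (Fin r) ℝ),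
        X1ᵀ * dX1 = 0 ∧ X2ᵀ * dX2 = 0 ∧
        tangentProjector X1 X2 g = dX1 * S * X2ᵀ + X1 * dS * X2ᵀ + X1 * S * dX2ᵀ) ∧
    (∀ (dX1 : Matrix (Fin n1) (Fin r) ℝ) (dS : Matrix (Fin r) (Fin r) ℝ)
        (dX2 : Matrix (Fin n2) (Fin r) ℝ),
        X1ᵀ * dX1 = 0 → X2ᵀ * dX2 = 0 →
        tangentProjector X1 X2 (dX1 * S * X2ᵀ + X1 * dS * X2ᵀ + X1 * S * dX2ᵀ)
          = dX1 * S * X2ᵀ + X1 * dS * X2ᵀ + X1 * S * dX2ᵀ) := by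
  have hSinv : S * S⁻¹ = 1 := Matrix.mul_nonsing_inv S hS
  have hSinv' : S⁻¹ * S = 1 := Matrix.nonsing_inv_mul S hS
  have h1 : ∀ {m : ℕ} (A : Matrix (Fin r) (Fin m) ℝ), X1ᵀ * (X1 * A) = A := by
    intro m A; rw [← Matrix.mul_assoc, hX1, Matrix.one_mul]
  have h2 : ∀ {m : ℕ} (A : Matrix (Fin r) (Fin m) ℝ), X2ᵀ * (X2 * A) = A := by
    intro m A; rw [← Matrix.mul_assoc, hX2, Matrix.one_mul]
  have hs1 : ∀ {m : ℕ} (A : Matrix (Fin r) (Fin m) ℝ), S * (S⁻¹ * A) = A := by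
    intro m A; rw [← Matrix.mul_assoc, hSinv, Matrix.one_mul]
  have hs2 : ∀ {m : ℕ} (A : Matrix (Fin r) (Fin m) ℝ), S⁻¹ * (S * A) = A := by
    intro m A; rw [← Matrix.mul_assoc, hSinv', Matrix.one_mul]
  constructor
  · intro g
    refine ⟨g * X2 * S⁻¹ - X1 * (X1ᵀ * (g * (X2 * S⁻¹))), X1ᵀ * (g * X2),
      gᵀ * (X1 * S⁻¹ᵀ) - X2 * (X2ᵀ * (gᵀ * (X1 * S⁻¹ᵀ))), ?_, ?_, ?_⟩
    · rw [Matrix.mul_sub, h1, Matrix.mul_assoc, sub_self]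
    · rw [Matrix.mul_sub, h2, sub_self]
    · simp only [tangentProjector, Matrix.sub_mul, Matrix.mul_sub, Matrix.add_mul,
        Matrix.mul_add, Matrix.transpose_sub, Matrix.transpose_mul,
        Matrix.transpose_transpose, Matrix.mul_assoc, h1, h2, hs1, hs2]
      abel
  · intro dX1 dS dX2 hd1 hd2
    have hd1' : ∀ {m : ℕ} (A : Matrix (Fin r) (Fin m) ℝ), X1ᵀ * (dX1 * A) = 0 := by
      intro m A; rw [← Matrix.mul_assoc, hd1, Matrix.zero_mul]
    have hd2' : ∀ {m : ℕ} (A : Matrix (Fin r) (Fin m) ℝ), X2ᵀ * (dX2 * A) = 0 := by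
      intro m A; rw [← Matrix.mul_assoc, hd2, Matrix.zero_mul]
    have hd2t : dX2ᵀ * X2 = 0 := by
      have := congrArg Matrix.transpose hd2
      simpa using this
    have hd2t' : ∀ {m : ℕ} (A : Matrix (Fin r) (Fin m) ℝ), dX2ᵀ * (X2 * A) = 0 := by
      intro m A; rw [← Matrix.mul_assoc, hd2t, Matrix.zero_mul]
    simp only [tangentProjector, Matrix.sub_mul, Matrix.mul_sub, Matrix.add_mul,
      Matrix.mul_add, Matrix.mul_assoc, h1, h2, hd1', hd2', hd2t',
      Matrix.mul_zero, Matrix.zero_mul, add_zero, zero_add, sub_zero]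
    abel
end
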